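/- arXiv:2404.04656 — 2 statements merged into one kernel-verified Lean document; each statement's English description precedes it below -/
import Mathlib

section
/- Let μ be a probability measure on a measurable space and let r_w, r_l : Ω → ℝ be measurable functions such that -log σ(r_w - r_l), -log σ(r_w), and -log σ(-r_l) are all μ-integrable. Then the expected DPO loss is strictly less than the expected binary cross-entropy loss: ∫ (-log σ(r_w - r_l)) dμ < ∫ (-log σ(r_w)) dμ + ∫ (-log σ(-r_l)) dμ, where σ(z) = 1/(1 + e^{-z}) is the logistic sigmoid function. -/
open Real MeasureTheory

/-- The logistic sigmoid function `σ(z) = 1 / (1 + e^{-z})`. -/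
noncomputable def logisticSigmoid (z : ℝ) : ℝ := 1 / (1 + Real.exp (-z))

lemma neg_log_logisticSigmoid (z : ℝ) :
    -Real.log (logisticSigmoid z) = Real.log (1 + Real.exp (-z)) := by
  have hz : (0:ℝ) < 1 + Real.exp (-z) := by positivity
  rw [logisticSigmoid, Real.log_div one_ne_zero (ne_of_gt hz), Real.log_one]
  ring

lemma dpo_lt_bce (a b : ℝ) :
    -Real.log (logisticSigmoid (a - b)) <
      -Real.log (logisticSigmoid a) + -Real.log (logisticSigmoid (-b)) := by
  rw [neg_log_logisticSigmoid, neg_log_logisticSigmoid, neg_log_logisticSigmoid, neg_neg]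
  have h1 : (0:ℝ) < 1 + Real.exp (-(a - b)) := by positivity
  rw [← Real.log_mul (by positivity) (by positivity)]
  apply Real.log_lt_log h1
  have he : Real.exp (-a) * Real.exp b = Real.exp (-(a - b)) := by
    rw [← Real.exp_add]; ring_nf
  have ha := Real.exp_pos (-a)
  have hb := Real.exp_pos b
  nlinarith [he]

/-- For a probability measure `μ` and measurable rewards `r_w, r_l` with the relevant
losses integrable, the expected DPO loss is strictly less than the expected BCE loss. -/
theorem expected_dpo_loss_lt_expected_bce_loss
    {Ω : Type*} [MeasurableSpace Ω] (μ : Measure Ω) [IsProbabilityMeasure μ]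
    (r_w r_l : Ω → ℝ) (hw : Measurable r_w) (hl : Measurable r_l)
    (h₁ : Integrable (fun ω => -Real.log (logisticSigmoid (r_w ω - r_l ω))) μ)
    (h₂ : Integrable (fun ω => -Real.log (logisticSigmoid (r_w ω))) μ)
    (h₃ : Integrable (fun ω => -Real.log (logisticSigmoid (-(r_l ω)))) μ) :
    ∫ ω, -Real.log (logisticSigmoid (r_w ω - r_l ω)) ∂μ <
      (∫ ω, -Real.log (logisticSigmoid (r_w ω)) ∂μ) +
        ∫ ω, -Real.log (logisticSigmoid (-(r_l ω))) ∂μ := by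
  set f := fun ω => -Real.log (logisticSigmoid (r_w ω - r_l ω))
  set g := fun ω => (-Real.log (logisticSigmoid (r_w ω)) +
      -Real.log (logisticSigmoid (-(r_l ω)))) - f ω with hg
  have hgi : Integrable g μ := (h₂.add h₃).sub h₁
  have hgpos : ∀ ω, 0 < g ω := fun ω => by
    have := dpo_lt_bce (r_w ω) (r_l ω)
    simp only [hg, f]; linarith
  have hpos : 0 < ∫ ω, g ω ∂μ := by
    rw [integral_pos_iff_support_of_nonneg_ae
      (Filter.Eventually.of_forall fun ω => (hgpos ω).le) hgi]
    have : Function.support g = Set.univ :=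
      Set.eq_univ_of_forall fun ω => (hgpos ω).ne'
    rw [this]
    simp
  have : ∫ ω, g ω ∂μ = ((∫ ω, -Real.log (logisticSigmoid (r_w ω)) ∂μ) +
      ∫ ω, -Real.log (logisticSigmoid (-(r_l ω))) ∂μ) - ∫ ω, f ω ∂μ := by
    have e1 := integral_sub (h₂.add h₃) h₁
    have e2 := integral_add h₂ h₃
    simp only [Pi.add_apply] at e1
    rw [e2] at e1
    exact e1
  linarith
end

section
/- For all real numbers a, b, and δ, the gap between the δ-shifted pointwise binary cross-entropy loss and the pointwise DPO loss equals log of one plus the ratio of the error term to 1 + e^{-(a-b)}; that is, (-log σ(a - δ) - log σ(-(b - δ))) - (-log σ(a - b)) = log((1 + e^{-(a-b)} + e^{-(a-δ)} + e^{(b-δ)}) / (1 + e^{-(a-b)})), where σ(z) = 1/(1 + e^{-z}) is the logistic sigmoid function. In particular, this gap is strictly positive. -/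
open Real

lemma log_logisticSigmoid (z : ℝ) :
    Real.log (logisticSigmoid z) = -Real.log (1 + Real.exp (-z)) := by
  have h : (0:ℝ) < 1 + Real.exp (-z) := by positivity
  rw [logisticSigmoid, Real.log_div one_ne_zero h.ne', Real.log_one, zero_sub]

/-- The gap between the `δ`-shifted pointwise BCE loss and the pointwise DPO loss equals
`log((1 + e^{-(a-b)} + e^{-(a-δ)} + e^{(b-δ)}) / (1 + e^{-(a-b)}))`, and this gap is
strictly positive. -/
theorem shifted_bce_dpo_gap_eq (a b δ : ℝ) :
    ((-Real.log (logisticSigmoid (a - δ)) - Real.log (logisticSigmoid (-(b - δ)))) -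
        (-Real.log (logisticSigmoid (a - b))) =
      Real.log ((1 + Real.exp (-(a - b)) + Real.exp (-(a - δ)) + Real.exp (b - δ)) /
        (1 + Real.exp (-(a - b))))) ∧
    0 < (-Real.log (logisticSigmoid (a - δ)) - Real.log (logisticSigmoid (-(b - δ)))) -
        (-Real.log (logisticSigmoid (a - b))) := by
  have hA : (0:ℝ) < 1 + Real.exp (-(a - δ)) := by positivity
  have hB : (0:ℝ) < 1 + Real.exp (b - δ) := by positivity
  have hC : (0:ℝ) < 1 + Real.exp (-(a - b)) := by positivity
  have hprod : (1 + Real.exp (-(a - δ))) * (1 + Real.exp (b - δ))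
      = 1 + Real.exp (-(a - b)) + Real.exp (-(a - δ)) + Real.exp (b - δ) := by
    have : Real.exp (-(a - δ)) * Real.exp (b - δ) = Real.exp (-(a - b)) := by
      rw [← Real.exp_add]; ring_nf
    ring_nf
    ring_nf at this
    rw [this]; ring
  have heq : (-Real.log (logisticSigmoid (a - δ)) - Real.log (logisticSigmoid (-(b - δ)))) -
        (-Real.log (logisticSigmoid (a - b))) =
      Real.log ((1 + Real.exp (-(a - b)) + Real.exp (-(a - δ)) + Real.exp (b - δ)) /
        (1 + Real.exp (-(a - b)))) := by
    rw [log_logisticSigmoid, log_logisticSigmoid, log_logisticSigmoid, neg_neg,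
      Real.log_div (by positivity) hC.ne', ← hprod,
      Real.log_mul hA.ne' hB.ne']
    ring
  refine ⟨heq, ?_⟩
  rw [heq]
  apply Real.log_pos
  rw [lt_div_iff₀ hC, one_mul]
  have := Real.exp_pos (-(a - δ))
  have := Real.exp_pos (b - δ)
  linarith
end
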